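/- For a finite alphabet X, there exists a sequence of subsets C^n(R) ⊆ X^n (n = 1, 2, ...), not depending on the source distribution, such that |C^n(R)| ≤ (n+1)^{|X|}·2^{nR} and for every distribution p_X on X, Pr{X^n ∉ C^n(R)} ≤ (n+1)^{|X|}·2^{−n·E(R|p_X)}, where X^n is i.i.d. ~ p_X and E(R|p_X) = min_{P : H(P) ≥ R} D(P‖p_X). -/

import Mathlib

/-- Base-2 Shannon entropy of a distribution on a finite set. -/
noncomputable def ent {𝒳 : Type*} [Fintype 𝒳] (P : 𝒳 → ℝ) : ℝ :=
  -∑ x, P x * Real.logb 2 (P x)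

/-- Base-2 relative entropy (Kullback–Leibler divergence). -/
noncomputable def KL {𝒳 : Type*} [Fintype 𝒳] (P Q : 𝒳 → ℝ) : ℝ :=
  ∑ x, P x * Real.logb 2 (P x / Q x)

/-- The exponent `E(R|p_X) = min_{P : H(P) ≥ R} D(P‖p_X)`. -/
noncomputable def Eexp {𝒳 : Type*} [Fintype 𝒳] (R : ℝ) (pX : 𝒳 → ℝ) : ℝ :=
  sInf {d : ℝ | ∃ P : 𝒳 → ℝ,
    (∀ x, 0 ≤ P x) ∧ ∑ x, P x = 1 ∧ R ≤ ent P ∧ d = KL P pX}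
/-! Group the sequences of `𝒳ⁿ` by their type (letter counts). There are at most `(n+1)^|𝒳|`
types. Under the empirical distribution `P` of `x`, every sequence of the type class of `x`
has probability `2^{-nH(P)}`, so that class has at most `2^{nH(P)}` elements; under `p_X` each
has probability `2^{-n(H(P) + D(P‖p_X))}`, so the class has probability at most
`2^{-nD(P‖p_X)}`. Taking `C^n(R)` to be the union of the type classes with `H(P) ≤ R`, both
bounds follow by summing over types, since every type outside `C^n(R)` has `H(P) > R`
and hence `D(P‖p_X) ≥ E(R|p_X)`. -/

namespace MethodOfTypes

open Finset Real

section General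

variable {𝒳 : Type*} [Fintype 𝒳]

lemma prod_pow_eq_two_rpow_sum (c : 𝒳 → ℕ) (q : 𝒳 → ℝ) (hq : ∀ a, c a ≠ 0 → 0 < q a) :
    ∏ a, q a ^ c a = (2 : ℝ) ^ ∑ a, (c a : ℝ) * logb 2 (q a) := by
  rw [rpow_sum_of_pos two_pos]
  refine prod_congr rfl fun a _ => ?_
  by_cases hc : c a = 0
  · simp [hc]
  · rw [mul_comm, rpow_mul_natCast zero_le_two, rpow_logb two_pos (by norm_num) (hq a hc)]

lemma KL_nonneg {P Q : 𝒳 → ℝ} (hP : ∀ a, 0 ≤ P a) (hQ : ∀ a, 0 < Q a)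
    (hsum : ∑ a, Q a ≤ ∑ a, P a) : 0 ≤ KL P Q := by
  have gibbs : ∀ a, (P a - Q a) / log 2 ≤ P a * logb 2 (P a / Q a) := fun a => by
    have h := mul_le_mul_of_nonneg_left
      (self_sub_one_le_mul_log (div_nonneg (hP a) (hQ a).le)) (hQ a).le
    rw [mul_sub, mul_div_cancel₀ _ (hQ a).ne', mul_one, ← mul_assoc,
      mul_div_cancel₀ _ (hQ a).ne'] at h
    rw [logb, ← mul_div_assoc]
    exact div_le_div_of_nonneg_right h (log_nonneg one_le_two)
  calc (0 : ℝ) ≤ ∑ a, (P a - Q a) / log 2 := by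
        rw [← sum_div, sum_sub_distrib]
        exact div_nonneg (sub_nonneg.2 hsum) (log_nonneg one_le_two)
    _ ≤ KL P Q := sum_le_sum fun a _ => gibbs a

end General

variable {𝒳 : Type*} [DecidableEq 𝒳] {n : ℕ}

def typeCount (x : Fin n → 𝒳) (a : 𝒳) : ℕ := #{i | x i = a}

noncomputable def empirical (x : Fin n → 𝒳) (a : 𝒳) : ℝ := typeCount x a / n

lemma typeCount_le (x : Fin n → 𝒳) (a : 𝒳) : typeCount x a ≤ n := by
  simpa [typeCount] using card_filter_le univ fun i => x i = a

lemma empirical_nonneg (x : Fin n → 𝒳) (a : 𝒳) : 0 ≤ empirical x a := by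
  unfold empirical; positivity

lemma natCast_mul_empirical (x : Fin n → 𝒳) (a : 𝒳) : n * empirical x a = typeCount x a := by
  rcases Nat.eq_zero_or_pos n with rfl | hn
  · simp [Nat.le_zero.1 (typeCount_le x a)]
  · unfold empirical; field_simp

variable [Fintype 𝒳]

def typeClass (x : Fin n → 𝒳) : Finset (Fin n → 𝒳) := {y | typeCount y = typeCount x}

lemma prod_comp_eq_prod_pow_typeCount {M : Type*} [CommMonoid M] (x : Fin n → 𝒳) (f : 𝒳 → M) :
    ∏ i, f (x i) = ∏ a, f a ^ typeCount x a := by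
  rw [← prod_fiberwise_of_maps_to (fun i _ => mem_univ (x i)) (fun i => f (x i))]
  refine prod_congr rfl fun a _ => ?_
  rw [typeCount, ← prod_const]
  exact prod_congr rfl fun i hi => by rw [(mem_filter.1 hi).2]

lemma sum_empirical (hn : 0 < n) (x : Fin n → 𝒳) : ∑ a, empirical x a = 1 := by
  have hcount : ∑ a, typeCount x a = n := by
    simpa [typeCount] using (card_eq_sum_card_fiberwise fun i (_ : i ∈ univ) => mem_univ (x i)).symm
  have : (n : ℝ) * ∑ a, empirical x a = n := by
    simp_rw [mul_sum, natCast_mul_empirical]; exact_mod_cast hcount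
  rwa [mul_eq_left₀ (by positivity)] at this

lemma sum_empirical_pow (x : Fin n → 𝒳) : (∑ a, empirical x a) ^ n = 1 := by
  rcases Nat.eq_zero_or_pos n with rfl | hn
  · simp
  · rw [sum_empirical hn, one_pow]

lemma sum_typeClass_prod (x : Fin n → 𝒳) (f : 𝒳 → ℝ) :
    ∑ y ∈ typeClass x, ∏ i, f (y i) = #(typeClass x) * ∏ a, f a ^ typeCount x a := by
  rw [← nsmul_eq_mul, ← sum_const]
  refine sum_congr rfl fun y hy => ?_
  rw [prod_comp_eq_prod_pow_typeCount, (mem_filter.1 hy).2]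

lemma prod_empirical_pow_typeCount (x : Fin n → 𝒳) :
    ∏ a, empirical x a ^ typeCount x a = (2 : ℝ) ^ (-(n * ent (empirical x))) := by
  have hpos (a : 𝒳) (ha : typeCount x a ≠ 0) : 0 < empirical x a :=
    div_pos (Nat.cast_pos.2 (Nat.pos_of_ne_zero ha))
      (Nat.cast_pos.2 ((Nat.pos_of_ne_zero ha).trans_le (typeCount_le x a)))
  rw [prod_pow_eq_two_rpow_sum _ _ hpos]
  simp_rw [ent, mul_neg, neg_neg, mul_sum, ← mul_assoc, natCast_mul_empirical]

lemma prod_pow_typeCount {p : 𝒳 → ℝ} (hp : ∀ a, 0 < p a) (x : Fin n → 𝒳) :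
    ∏ a, p a ^ typeCount x a
      = (2 : ℝ) ^ (-(n * (ent (empirical x) + KL (empirical x) p))) := by
  have cross_entropy : ∀ a, empirical x a * logb 2 (empirical x a)
      - empirical x a * logb 2 (empirical x a / p a) = empirical x a * logb 2 (p a) := fun a => by
    rcases (empirical_nonneg x a).eq_or_lt with h | h
    · simp [← h]
    · rw [logb_div h.ne' (hp a).ne']; ring
  rw [prod_pow_eq_two_rpow_sum _ _ fun a _ => hp a]
  congr 1
  calc ∑ a, (typeCount x a : ℝ) * logb 2 (p a)
      = n * ∑ a, (empirical x a * logb 2 (empirical x a)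
          - empirical x a * logb 2 (empirical x a / p a)) := by
        simp_rw [cross_entropy, mul_sum, ← mul_assoc, natCast_mul_empirical]
    _ = _ := by rw [sum_sub_distrib, ent, KL]; ring

lemma card_typeClass_le (x : Fin n → 𝒳) :
    (#(typeClass x) : ℝ) ≤ (2 : ℝ) ^ (n * ent (empirical x)) := by
  have mass : ∑ y ∈ typeClass x, ∏ i, empirical x (y i)
      = #(typeClass x) * (2 : ℝ) ^ (-(n * ent (empirical x))) := by
    rw [sum_typeClass_prod, prod_empirical_pow_typeCount]
  have total : ∑ y : Fin n → 𝒳, ∏ i, empirical x (y i) = 1 := by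
    rw [← sum_empirical_pow x, ← Fin.prod_const, prod_univ_sum, Fintype.piFinset_univ]
  have : (#(typeClass x) : ℝ) * (2 : ℝ) ^ (-(n * ent (empirical x))) ≤ 1 :=
    mass ▸ total ▸ sum_le_sum_of_subset_of_nonneg (subset_univ _)
      fun y _ _ => prod_nonneg fun i _ => empirical_nonneg x (y i)
  rwa [rpow_neg zero_le_two, ← div_eq_mul_inv, div_le_one (by positivity)] at this

lemma sum_typeClass_prod_le {p : 𝒳 → ℝ} (hp : ∀ a, 0 < p a) (x : Fin n → 𝒳) :
    ∑ y ∈ typeClass x, ∏ i, p (y i) ≤ (2 : ℝ) ^ (-(n * KL (empirical x) p)) := by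
  rw [sum_typeClass_prod, prod_pow_typeCount hp]
  calc (#(typeClass x) : ℝ) * (2 : ℝ) ^ (-(n * (ent (empirical x) + KL (empirical x) p)))
      ≤ (2 : ℝ) ^ (n * ent (empirical x))
          * (2 : ℝ) ^ (-(n * (ent (empirical x) + KL (empirical x) p))) := by
        gcongr; exact card_typeClass_le x
    _ = (2 : ℝ) ^ (-(n * KL (empirical x) p)) := by rw [← rpow_add two_pos]; ring_nf

lemma card_image_typeCount_le (s : Finset (Fin n → 𝒳)) :
    #(s.image typeCount) ≤ (n + 1) ^ Fintype.card 𝒳 := by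
  calc #(s.image typeCount) ≤ #(Fintype.piFinset fun _ : 𝒳 => range (n + 1)) := by
        refine card_le_card fun c hc => ?_
        obtain ⟨x, -, rfl⟩ := mem_image.1 hc
        simpa [Fintype.mem_piFinset, Nat.lt_succ_iff] using typeCount_le x
    _ = (n + 1) ^ Fintype.card 𝒳 := by simp

lemma sum_le_of_forall_sum_typeClass_le {s : Finset (Fin n → 𝒳)} {f : (Fin n → 𝒳) → ℝ}
    (hf : ∀ y, 0 ≤ f y) {B : ℝ} (hB : 0 ≤ B) (h : ∀ x ∈ s, ∑ y ∈ typeClass x, f y ≤ B) :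
    ∑ x ∈ s, f x ≤ ((n : ℝ) + 1) ^ Fintype.card 𝒳 * B := by
  rw [← sum_fiberwise_of_maps_to fun x hx => mem_image_of_mem typeCount hx]
  calc _ ≤ ∑ _c ∈ s.image typeCount, B := sum_le_sum fun c hc => by
          obtain ⟨x, hx, rfl⟩ := mem_image.1 hc
          refine (sum_le_sum_of_subset_of_nonneg (fun y hy => ?_) fun y _ _ => hf y).trans (h x hx)
          exact mem_filter.2 ⟨mem_univ y, (mem_filter.1 hy).2⟩
    _ ≤ ((n : ℝ) + 1) ^ Fintype.card 𝒳 * B := by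
        rw [sum_const, nsmul_eq_mul]
        gcongr
        exact_mod_cast card_image_typeCount_le s

lemma natCast_mul_Eexp_le {R : ℝ} {p : 𝒳 → ℝ} (hp : ∀ a, 0 < p a) (hp1 : ∑ a, p a = 1)
    {x : Fin n → 𝒳} (hx : R ≤ ent (empirical x)) : n * Eexp R p ≤ n * KL (empirical x) p := by
  -- for `n = 0` the empirical distribution is `0`, not a probability vector
  rcases Nat.eq_zero_or_pos n with rfl | hn
  · simp
  gcongr
  refine csInf_le ⟨0, ?_⟩ ⟨empirical x, empirical_nonneg x, sum_empirical hn x, hx, rfl⟩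
  rintro _ ⟨P, hP, hP1, -, rfl⟩
  exact KL_nonneg hP hp (hp1.trans hP1.symm).le

end MethodOfTypes

open MethodOfTypes Finset in
theorem stmt_16 {𝒳 : Type*} [Fintype 𝒳] [DecidableEq 𝒳]
    (R : ℝ) :
    ∃ C : (n : ℕ) → Finset (Fin n → 𝒳),
      (∀ n : ℕ, ((C n).card : ℝ)
          ≤ ((n : ℝ) + 1) ^ (Fintype.card 𝒳) * (2 : ℝ) ^ ((n : ℝ) * R)) ∧
      (∀ n : ℕ, ∀ pX : 𝒳 → ℝ, (∀ x, 0 < pX x) → ∑ x, pX x = 1 →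
        ∑ x ∈ (C n)ᶜ, ∏ i, pX (x i)
          ≤ ((n : ℝ) + 1) ^ (Fintype.card 𝒳) * (2 : ℝ) ^ (-(n : ℝ) * Eexp R pX)) := by
  refine ⟨fun n => {x | ent (empirical x) ≤ R}, fun n => ?_, fun n pX hp hp1 => ?_⟩
  · have h (x : Fin n → 𝒳) (hx : x ∈ ({x | ent (empirical x) ≤ R} : Finset _)) :
        ∑ _y ∈ typeClass x, (1 : ℝ) ≤ 2 ^ (n * R) :=
      calc ∑ _y ∈ typeClass x, (1 : ℝ) = #(typeClass x) := by simp
        _ ≤ 2 ^ (n * ent (empirical x)) := card_typeClass_le x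
        _ ≤ 2 ^ (n * R) := by gcongr; norm_num; exact (mem_filter.1 hx).2
    simpa using sum_le_of_forall_sum_typeClass_le (fun _ => zero_le_one) (by positivity) h
  · refine sum_le_of_forall_sum_typeClass_le (fun y => prod_nonneg fun i _ => (hp _).le)
      (by positivity) fun x hx => ?_
    have hR : R ≤ ent (empirical x) := by simpa using (not_le.1 (by simpa using hx)).le
    calc _ ≤ (2 : ℝ) ^ (-(n * KL (empirical x) pX)) := sum_typeClass_prod_le hp x
      _ ≤ _ := by gcongr; norm_num; linarith [natCast_mul_Eexp_le hp hp1 hR]
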